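/- arXiv:2104.01368 — 3 statements merged into one kernel-verified Lean document; each statement's English description precedes it below -/
import Mathlib

section
/- Let f ∈ L(X°) and g ∈ L(∂X). A function u ∈ L(X) solves the Neumann problem (Δu = f on X° and ∂_n u = g on ∂X) if and only if u solves the Poisson equation Δu = f̃ on all of X, where f̃(x) = f(x) for x ∈ X° and f̃(y) = −g(y) for y ∈ ∂X. In particular, the Neumann problem is solvable if and only if ∫_{X°} f dπ = ∫_{∂X} g dπ. -/
open Matrix Finset

/-- The Laplacian `Δu = Pu − u` acting on complex functions. -/
noncomputable def lap {X : Type*} [Fintype X] (P : Matrix X X ℝ) (u : X → ℂ) (x : X) : ℂ :=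
  (∑ y, (P x y : ℂ) * u y) - u x

set_option linter.unusedSectionVars false

section aux
variable {X : Type*} [Fintype X] [DecidableEq X] (P : Matrix X X ℝ)

lemma pow_entry_nonneg (hnonneg : ∀ x y, 0 ≤ P x y) : ∀ n x y, 0 ≤ (P ^ n) x y := by
  intro n
  induction n with
  | zero => intro x y; simp [Matrix.one_apply]; split <;> norm_num
  | succ n ih =>
    intro x y
    rw [pow_succ, Matrix.mul_apply]
    exact Finset.sum_nonneg fun z _ => mul_nonneg (ih x z) (hnonneg z y)

lemma harmonic_real_const (hnonneg : ∀ x y, 0 ≤ P x y) (hrow : ∀ x, ∑ y, P x y = 1)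
    (hirr : ∀ x y, ∃ n, 1 ≤ n ∧ 0 < (P ^ n) x y)
    (u : X → ℝ) (hu : ∀ x, ∑ y, P x y * u y = u x) : ∀ x y, u x = u y := by
  intro x y
  obtain ⟨x0, -, hx0⟩ := Finset.exists_max_image (univ : Finset X) u ⟨x, mem_univ x⟩
  -- one step
  have step : ∀ a, u a = u x0 → ∀ b, 0 < P a b → u b = u x0 := by
    intro a ha b hb
    have h0 : ∑ y, P a y * (u x0 - u y) = 0 := by
      have : ∑ y, P a y * (u x0 - u y) = (∑ y, P a y) * u x0 - ∑ y, P a y * u y := by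
        rw [Finset.sum_mul, ← Finset.sum_sub_distrib]
        exact Finset.sum_congr rfl fun y _ => by ring
      rw [this, hrow, hu, one_mul, ha, sub_self]
    have hz := (Finset.sum_eq_zero_iff_of_nonneg
      (fun y _ => mul_nonneg (hnonneg a y) (sub_nonneg.mpr (hx0 y (mem_univ y))))).mp h0 b (mem_univ b)
    have := mul_eq_zero.mp hz
    rcases this with h | h
    · exact absurd h hb.ne'
    · linarith [sub_eq_zero.mp h]
  -- n steps
  have steps : ∀ n b, 0 < (P ^ n) x0 b → u b = u x0 := by
    intro n
    induction n with
    | zero =>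
      intro b hb
      simp [Matrix.one_apply] at hb
      by_cases h : x0 = b
      · exact h ▸ rfl
      · simp [h] at hb
    | succ n ih =>
      intro b hb
      rw [pow_succ, Matrix.mul_apply] at hb
      obtain ⟨z, -, hz⟩ := Finset.exists_lt_of_sum_lt (by simpa using hb :
        ∑ z, (0:ℝ) < ∑ z, (P ^ n) x0 z * P z b)
      rcases mul_pos_iff.mp hz with ⟨h1, h2⟩ | ⟨h1, h2⟩
      · exact step z (ih z h1) b h2
      · exact absurd h1 (not_lt.mpr (pow_entry_nonneg P hnonneg n x0 z))
  obtain ⟨n, -, hn⟩ := hirr x0 x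
  obtain ⟨m, -, hm⟩ := hirr x0 y
  rw [steps n x hn, steps m y hm]

lemma harmonic_const (hnonneg : ∀ x y, 0 ≤ P x y) (hrow : ∀ x, ∑ y, P x y = 1)
    (hirr : ∀ x y, ∃ n, 1 ≤ n ∧ 0 < (P ^ n) x y)
    (u : X → ℂ) (hu : ∀ x, ∑ y, (P x y : ℂ) * u y = u x) : ∀ x y, u x = u y := by
  have hre : ∀ x, ∑ y, P x y * (u y).re = (u x).re := by
    intro x
    calc ∑ y, P x y * (u y).re = ∑ y, ((P x y : ℂ) * u y).re := by
          simp [Complex.mul_re]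
      _ = (∑ y, (P x y : ℂ) * u y).re := by rw [Complex.re_sum]
      _ = (u x).re := by rw [hu]
  have him : ∀ x, ∑ y, P x y * (u y).im = (u x).im := by
    intro x
    calc ∑ y, P x y * (u y).im = ∑ y, ((P x y : ℂ) * u y).im := by
          simp [Complex.mul_im]
      _ = (∑ y, (P x y : ℂ) * u y).im := by rw [Complex.im_sum]
      _ = (u x).im := by rw [hu]
  intro x y
  exact Complex.ext (harmonic_real_const P hnonneg hrow hirr _ hre x y)
    (harmonic_real_const P hnonneg hrow hirr _ him x y)

end aux

section core
variable {X : Type*} [Fintype X] [DecidableEq X]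

noncomputable def lapT (P : Matrix X X ℝ) : (X → ℂ) →ₗ[ℂ] (X → ℂ) :=
  (P.map (Complex.ofReal)).mulVecLin - LinearMap.id

lemma lapT_apply (P : Matrix X X ℝ) (u : X → ℂ) (x : X) :
    lapT P u x = (∑ y, (P x y : ℂ) * u y) - u x := by
  simp [lapT, Matrix.mulVecLin_apply, Matrix.mulVec, dotProduct, Matrix.map_apply]

noncomputable def piF (π : X → ℝ) : (X → ℂ) →ₗ[ℂ] ℂ where
  toFun h := ∑ x, (π x : ℂ) * h x
  map_add' a b := by simp [mul_add, Finset.sum_add_distrib]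
  map_smul' c a := by
    simp only [Pi.smul_apply, smul_eq_mul, RingHom.id_apply, Finset.mul_sum]
    exact Finset.sum_congr rfl fun x _ => by ring
end core

set_option linter.unusedSectionVars false

section core2
variable {X : Type*} [Fintype X] [DecidableEq X]

lemma range_le_ker (P : Matrix X X ℝ) (π : X → ℝ)
    (hπstat : ∀ y, ∑ x, π x * P x y = π y) :
    LinearMap.range (lapT P) ≤ LinearMap.ker (piF π) := by
  rintro - ⟨u, rfl⟩
  have key : ∀ y, ∑ x, (π x : ℂ) * (P x y : ℂ) = (π y : ℂ) := by
    intro y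
    have := hπstat y
    push_cast [← this]
    rfl
  show ∑ x, (π x : ℂ) * lapT P u x = 0
  simp only [lapT_apply, mul_sub, Finset.sum_sub_distrib, Finset.mul_sum]
  rw [Finset.sum_comm]
  have : ∀ y, ∑ x, (π x : ℂ) * ((P x y : ℂ) * u y) = (π y : ℂ) * u y := by
    intro y
    rw [show ∑ x, (π x : ℂ) * ((P x y : ℂ) * u y) = (∑ x, (π x : ℂ) * (P x y : ℂ)) * u y by
      rw [Finset.sum_mul]; exact Finset.sum_congr rfl fun x _ => by ring, key]
  rw [Finset.sum_congr rfl fun y _ => this y, sub_self]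
end core2

section core3
variable {X : Type*} [Fintype X] [DecidableEq X]

lemma ker_lapT (P : Matrix X X ℝ)
    (hcard : 1 < Fintype.card X)
    (hnonneg : ∀ x y, 0 ≤ P x y) (hrow : ∀ x, ∑ y, P x y = 1)
    (hirr : ∀ x y, ∃ n, 1 ≤ n ∧ 0 < (P ^ n) x y) :
    LinearMap.ker (lapT P) = Submodule.span ℂ {(fun _ => 1 : X → ℂ)} := by
  have hne : Nonempty X := Fintype.card_pos_iff.mp (by omega)
  apply le_antisymm
  · intro u hu
    have hu' : ∀ x, ∑ y, (P x y : ℂ) * u y = u x := by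
      intro x
      simpa [lapT_apply, sub_eq_zero] using congrFun (LinearMap.mem_ker.mp hu) x
    have hc := harmonic_const P hnonneg hrow hirr u hu'
    obtain ⟨x0⟩ := hne
    exact Submodule.mem_span_singleton.mpr ⟨u x0, funext fun x => by
      simp [hc x x0]⟩
  · rw [Submodule.span_le, Set.singleton_subset_iff]
    refine LinearMap.mem_ker.mpr (funext fun x => ?_)
    rw [lapT_apply]
    have : (∑ y, (P x y : ℂ)) = 1 := by exact_mod_cast congrArg Complex.ofReal (hrow x)
    simp only [mul_one]
    rw [this]; simp

lemma range_lapT (P : Matrix X X ℝ) (π : X → ℝ)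
    (hcard : 1 < Fintype.card X)
    (hnonneg : ∀ x y, 0 ≤ P x y) (hrow : ∀ x, ∑ y, P x y = 1)
    (hirr : ∀ x y, ∃ n, 1 ≤ n ∧ 0 < (P ^ n) x y)
    (hπstat : ∀ y, ∑ x, π x * P x y = π y) (hπpos : ∀ x, 0 < π x) :
    LinearMap.range (lapT P) = LinearMap.ker (piF π) := by
  have hne : Nonempty X := Fintype.card_pos_iff.mp (by omega)
  have hdim : Module.finrank ℂ (X → ℂ) = Fintype.card X := Module.finrank_fintype_fun_eq_card ℂ
  have hker : Module.finrank ℂ (LinearMap.ker (lapT P)) = 1 := by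
    rw [ker_lapT P hcard hnonneg hrow hirr]
    have h1 : (fun _ => 1 : X → ℂ) ≠ 0 := by
      obtain ⟨x0⟩ := hne
      intro h
      exact one_ne_zero (congrFun h x0)
    exact finrank_span_singleton h1
  have hrange : Module.finrank ℂ (LinearMap.range (lapT P)) = Fintype.card X - 1 := by
    have := LinearMap.finrank_range_add_finrank_ker (lapT P)
    omega
  have hφne : piF (X := X) π ≠ 0 := by
    obtain ⟨x0⟩ := hne
    intro h
    have := congrFun (congrArg DFunLike.coe h) (Pi.single x0 1)
    simp [piF, Pi.single_apply, mul_ite] at this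
    exact (hπpos x0).ne' this
  have hφrange : Module.finrank ℂ (LinearMap.range (piF (X := X) π)) = 1 := by
    refine le_antisymm ?_ ?_
    · exact le_trans (Submodule.finrank_le _) (by simp)
    · by_contra h
      push_neg at h
      interval_cases hh : Module.finrank ℂ (LinearMap.range (piF (X := X) π))
      exact hφne (LinearMap.range_eq_bot.mp (Submodule.finrank_eq_zero.mp hh))
  have hkerφ : Module.finrank ℂ (LinearMap.ker (piF (X := X) π)) = Fintype.card X - 1 := by
    have := LinearMap.finrank_range_add_finrank_ker (piF (X := X) π)
    omega
  exact Submodule.eq_of_le_of_finrank_le (range_le_ker P π hπstat) (by omega)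
end core3


/-- Solution of the Neumann problem: `u` solves `Δu = f` on `X°` and
`∂ₙu = g` on `∂X` iff `u` solves the Poisson equation `Δu = f̃` on all of `X`, where
`f̃ = f` on `X°` and `f̃ = −g` on `∂X`. In particular the Neumann problem is solvable
iff `∫_{X°} f dπ = ∫_{∂X} g dπ`. -/
theorem neumann_problem {X : Type*} [Fintype X] [DecidableEq X]
    (P : Matrix X X ℝ)
    (hcard : 1 < Fintype.card X)
    (hnonneg : ∀ x y, 0 ≤ P x y)
    (hrow : ∀ x, ∑ y, P x y = 1)
    (hirr : ∀ x y, ∃ n, 1 ≤ n ∧ 0 < (P ^ n) x y)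
    (π : X → ℝ)
    (hπstat : ∀ y, ∑ x, π x * P x y = π y)
    (hπpos : ∀ x, 0 < π x) (hπsum : ∑ x, π x = 1)
    (Bnd : Finset X) (hB : Bnd.Nonempty) (hB' : Bnd ≠ Finset.univ)
    (f g : X → ℂ) :
    (∀ u : X → ℂ,
      ((∀ x, x ∉ Bnd → lap P u x = f x) ∧ (∀ x ∈ Bnd, -lap P u x = g x)) ↔
        (∀ x, lap P u x = if x ∈ Bnd then -g x else f x)) ∧
    ((∃ u : X → ℂ,
        (∀ x, x ∉ Bnd → lap P u x = f x) ∧ (∀ x ∈ Bnd, -lap P u x = g x)) ↔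
      ∑ x ∈ Bndᶜ, (π x : ℂ) * f x = ∑ x ∈ Bnd, (π x : ℂ) * g x) := by
  have part1 : ∀ u : X → ℂ,
      ((∀ x, x ∉ Bnd → lap P u x = f x) ∧ (∀ x ∈ Bnd, -lap P u x = g x)) ↔
        (∀ x, lap P u x = if x ∈ Bnd then -g x else f x) := by
    intro u
    constructor
    · rintro ⟨h1, h2⟩ x
      by_cases hx : x ∈ Bnd
      · rw [if_pos hx]
        have := h2 x hx
        linear_combination -this
      · rw [if_neg hx]; exact h1 x hx
    · intro hpo
      exact ⟨fun x hx => by rw [hpo x, if_neg hx],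
             fun x hx => by rw [hpo x, if_pos hx, neg_neg]⟩
  refine ⟨part1, ?_⟩
  have hlap : ∀ (u : X → ℂ) x, lap P u x = lapT P u x := fun u x => (lapT_apply P u x).symm
  have step2 : (∃ u, ∀ x, lap P u x = if x ∈ Bnd then -g x else f x) ↔
      piF (X := X) π (fun x => if x ∈ Bnd then -g x else f x) = 0 := by
    constructor
    · rintro ⟨u, hu⟩
      have hm : (fun x => if x ∈ Bnd then -g x else f x) ∈ LinearMap.range (lapT P) :=
        ⟨u, funext fun x => by rw [← hlap, hu x]⟩
      rw [range_lapT P π hcard hnonneg hrow hirr hπstat hπpos] at hm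
      exact hm
    · intro h0
      have hm : (fun x => if x ∈ Bnd then -g x else f x) ∈ LinearMap.range (lapT P) := by
        rw [range_lapT P π hcard hnonneg hrow hirr hπstat hπpos]
        exact h0
      obtain ⟨u, hu⟩ := hm
      exact ⟨u, fun x => by rw [hlap, hu]⟩
  have step3 : piF (X := X) π (fun x => if x ∈ Bnd then -g x else f x) = 0 ↔
      ∑ x ∈ Bndᶜ, (π x : ℂ) * f x = ∑ x ∈ Bnd, (π x : ℂ) * g x := by
    have hval : piF (X := X) π (fun x => if x ∈ Bnd then -g x else f x)
        = ∑ x ∈ Bndᶜ, (π x : ℂ) * f x - ∑ x ∈ Bnd, (π x : ℂ) * g x := by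
      show ∑ x, (π x : ℂ) * (if x ∈ Bnd then -g x else f x) = _
      have hA : ∑ x ∈ Bnd, (π x : ℂ) * (if x ∈ Bnd then -g x else f x)
          = -∑ x ∈ Bnd, (π x : ℂ) * g x := by
        rw [← Finset.sum_neg_distrib]
        exact Finset.sum_congr rfl fun x hx => by rw [if_pos hx, mul_neg]
      have hC : ∑ x ∈ Bndᶜ, (π x : ℂ) * (if x ∈ Bnd then -g x else f x)
          = ∑ x ∈ Bndᶜ, (π x : ℂ) * f x :=
        Finset.sum_congr rfl fun x hx => by rw [if_neg (Finset.mem_compl.mp hx)]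
      rw [← Finset.sum_add_sum_compl Bnd, hA, hC]
      ring
    rw [hval, sub_eq_zero]
  exact ((exists_congr part1).trans step2).trans step3
end

section
/- Let v : X → ℝ satisfy v(x) ≥ 0 for all x and v(x₀) > 0 for at least one x₀ ∈ X, and let f ∈ L(X). Define P̃(x,y) = P(x,y)/(1+v(x)) and f̃(x) = f(x)/(1+v(x)). Then I − P̃ is invertible, (I − P̃)^{-1} = ∑_{n=0}^∞ P̃^n (convergent series), and the equation Δu − v·u = f has the unique solution u = −(I − P̃)^{-1} f̃. -/
open Matrix Finset

/-- The transition matrix associated with a potential: `P̃(x,y) = P(x,y)/(1+v(x))`. -/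
noncomputable def Ppot {X : Type*} (P : Matrix X X ℝ) (v : X → ℝ) : Matrix X X ℝ :=
  Matrix.of fun x y => P x y / (1 + v x)

/-! `P̃` has nonnegative entries and row sums `1/(1+v) ≤ 1`, strictly below `1` at `x₀`.
Writing `d = (I - P̃)𝟙 ≥ 0` for the row deficit, `𝟙 - P̃ⁿ𝟙 = ∑_{k<n} P̃ᵏd`, and irreducibility makes
every row of the right-hand side positive for large `n`, because every state reaches `x₀`. So some
power of `P̃` has `ℓ∞`-operator norm `< 1` and the Neumann series `∑ P̃ⁿ` converges to `(I - P̃)⁻¹`.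
Dividing `Δu - v·u = f` by `1 + v` turns it into `(I - P̃)u = -f̃`. -/

theorem summable_pow_of_norm_pow_lt_one {R : Type*} [NormedRing R] [CompleteSpace R] {x : R}
    {N : ℕ} [NeZero N] (h : ‖x ^ N‖ < 1) : Summable (x ^ ·) := by
  -- `n = qN + r` with `r < N`, and `xⁿ = (x^N)^q x^r`
  have hprod : Summable fun p : ℕ × Fin N => (x ^ N) ^ p.1 * x ^ (p.2 : ℕ) :=
    summable_mul_of_summable_norm (f := fun q : ℕ => (x ^ N) ^ q)
      (g := fun r : Fin N => x ^ (r : ℕ)) (summable_norm_geometric_of_norm_lt_one h) .of_finite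
  rw [← (Nat.divModEquiv N).symm.summable_iff]
  refine hprod.congr fun p => ?_
  simp only [Function.comp_apply, Nat.divModEquiv_symm_apply, pow_add, pow_mul']

namespace Matrix

section LinftyOpNorm

attribute [local instance] Matrix.linftyOpSeminormedAddCommGroup

theorem linfty_opNorm_lt_one {m n α : Type*} [Fintype m] [Fintype n] [SeminormedAddCommGroup α]
    {B : Matrix m n α} (h : ∀ i, ∑ j, ‖B i j‖ < 1) : ‖B‖ < 1 := by
  rw [linfty_opNorm_def, NNReal.coe_lt_one, Finset.sup_lt_iff zero_lt_one]
  intro i _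
  rw [← NNReal.coe_lt_one]
  push_cast
  exact h i

end LinftyOpNorm

theorem tsum_apply_apply {ι m n α : Type*} [AddCommMonoid α] [TopologicalSpace α] [T2Space α]
    {f : ι → Matrix m n α} (hf : Summable f) (i : m) (j : n) :
    (∑' k, f k) i j = ∑' k, f k i j :=
  (congrFun (tsum_apply hf) j).trans (tsum_apply (Pi.summable.1 hf i))

variable {n : Type*} [Fintype n] [DecidableEq n]

theorem pow_apply_pos_of_pos_imp_pos {R : Type*} [Semiring R] [LinearOrder R]
    [IsStrictOrderedRing R] {A B : Matrix n n R} (hA : ∀ i j, 0 ≤ A i j)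
    (hB : ∀ i j, 0 ≤ B i j) (hBA : ∀ i j, 0 < B i j → 0 < A i j) (l : ℕ) {i j : n}
    (h : 0 < (B ^ l) i j) : 0 < (A ^ l) i j := by
  induction l generalizing j with
  | zero => rwa [pow_zero] at h ⊢
  | succ l ih =>
    rw [pow_succ, mul_apply] at h ⊢
    obtain ⟨k, -, hk⟩ :=
      Finset.exists_lt_of_sum_lt (s := univ) (f := fun _ => (0 : R)) (by simpa using h)
    obtain ⟨hBl, hB1⟩ := (pos_and_pos_or_neg_and_neg_of_mul_pos hk).resolve_right
      fun hneg => (pow_apply_nonneg hB l i k).not_gt hneg.1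
    exact Finset.sum_pos' (fun k _ => mul_nonneg (pow_apply_nonneg hA l i k) (hA k j))
      ⟨k, mem_univ k, mul_pos (ih hBl) (hBA k j hB1)⟩

theorem sum_pow_apply_lt_one {A : Matrix n n ℝ} (hA : ∀ i j, 0 ≤ A i j)
    (hrow : ∀ i, ∑ j, A i j ≤ 1) {i k : n} (hk : ∑ j, A k j < 1) {l m : ℕ}
    (hl : 0 < (A ^ l) i k) (hlm : l < m) : ∑ j, (A ^ m) i j < 1 := by
  set d : n → ℝ := (1 - A) *ᵥ 1
  have hd : ∀ j, d j = 1 - ∑ j', A j j' := fun j => by simp [d, sub_mulVec, mulVec, dotProduct]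
  have hd_nonneg : ∀ j, 0 ≤ d j := fun j => by simp [hd, hrow j]
  have htel : (∑ r ∈ range m, A ^ r) *ᵥ d = 1 - A ^ m *ᵥ 1 := by
    rw [mulVec_mulVec, geom_sum_mul_neg, sub_mulVec, one_mulVec]
  have hterm : ∀ r, 0 ≤ (A ^ r *ᵥ d) i := fun r =>
    Finset.sum_nonneg fun j _ => mul_nonneg (pow_apply_nonneg hA r i j) (hd_nonneg j)
  have hleak : 0 < (A ^ l *ᵥ d) i :=
    Finset.sum_pos' (fun j _ => mul_nonneg (pow_apply_nonneg hA l i j) (hd_nonneg j))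
      ⟨k, mem_univ k, mul_pos hl (by simp [hd, hk])⟩
  have hsum : 0 < ((∑ r ∈ range m, A ^ r) *ᵥ d) i := by
    rw [sum_mulVec, Finset.sum_apply]
    exact Finset.sum_pos' (fun r _ => hterm r) ⟨l, mem_range.2 hlm, hleak⟩
  have hrow_i := congrFun htel i
  simp only [Pi.sub_apply, Pi.one_apply, mulVec, dotProduct, mul_one] at hrow_i hsum
  linarith

theorem summable_pow_of_row_sum_le_one {A : Matrix n n ℝ} (hA : ∀ i j, 0 ≤ A i j)
    (hrow : ∀ i, ∑ j, A i j ≤ 1) {k : n} (hk : ∑ j, A k j < 1)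
    (hreach : ∀ i, ∃ l, 0 < (A ^ l) i k) : Summable (A ^ ·) := by
  choose l hl using hreach
  let _ := Matrix.linftyOpNormedRing (n := n) (α := ℝ)
  -- the `ℓ∞`-operator norm induces the product uniformity, so completeness carries over
  have : @CompleteSpace (Matrix n n ℝ) PseudoMetricSpace.toUniformSpace :=
    inferInstanceAs (CompleteSpace (n → n → ℝ))
  refine summable_pow_of_norm_pow_lt_one (N := univ.sup l + 1) (linfty_opNorm_lt_one fun i => ?_)
  simp only [Real.norm_of_nonneg (pow_apply_nonneg hA _ i _)]
  exact sum_pow_apply_lt_one hA hrow hk (hl i) (Nat.lt_succ_of_le (le_sup (mem_univ i)))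

theorem mulVec_eq_iff_eq_mulVec {R : Type*} [Semiring R] {B C : Matrix n n R}
    (hBC : B * C = 1) (hCB : C * B = 1) {u w : n → R} : B *ᵥ u = w ↔ u = C *ᵥ w := by
  constructor
  · rintro rfl
    rw [mulVec_mulVec, hCB, one_mulVec]
  · rintro rfl
    rw [mulVec_mulVec, hBC, one_mulVec]

end Matrix

section Poisson

variable {X : Type*} {P : Matrix X X ℝ} {v : X → ℝ}

theorem Ppot_apply_nonneg (hP : ∀ x y, 0 ≤ P x y) (hv : ∀ x, 0 ≤ v x) (x y : X) :
    0 ≤ Ppot P v x y :=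
  div_nonneg (hP x y) (by linarith [hv x])

theorem sum_Ppot_apply [Fintype X] (hrow : ∀ x, ∑ y, P x y = 1) (x : X) :
    ∑ y, Ppot P v x y = 1 / (1 + v x) := by
  simp only [Ppot, of_apply, ← Finset.sum_div, hrow]

theorem summable_pow_Ppot [Fintype X] [DecidableEq X] (hP : ∀ x y, 0 ≤ P x y)
    (hrow : ∀ x, ∑ y, P x y = 1) (hv : ∀ x, 0 ≤ v x) {x₀ : X} (hx₀ : 0 < v x₀)
    (hreach : ∀ x, ∃ n, 0 < (P ^ n) x x₀) : Summable (Ppot P v ^ ·) := by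
  have h1v : ∀ x, 0 < 1 + v x := fun x => by linarith [hv x]
  have hA := Ppot_apply_nonneg hP hv
  refine summable_pow_of_row_sum_le_one hA (fun x => ?_) (k := x₀) ?_ fun x => ?_
  · rw [sum_Ppot_apply hrow, div_le_one (h1v x)]
    linarith [hv x]
  · rw [sum_Ppot_apply hrow, div_lt_one (h1v x₀)]
    linarith
  · obtain ⟨n, hn⟩ := hreach x
    exact ⟨n, pow_apply_pos_of_pos_imp_pos hA hP (fun x y h => div_pos h (h1v x)) n hn⟩

theorem one_sub_Ppot_mulVec_apply [Fintype X] [DecidableEq X] (hv : ∀ x, 1 + v x ≠ 0)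
    (u : X → ℂ) (x : X) :
    ((1 - Ppot P v).map Complex.ofReal *ᵥ u) x =
      -(lap P u x - v x * u x) / ((1 + v x : ℝ) : ℂ) := by
  have hx : (1 + v x : ℂ) ≠ 0 := mod_cast hv x
  simp only [mulVec, dotProduct, Ppot, map_apply, Matrix.sub_apply, one_apply, of_apply,
    Complex.ofReal_sub, apply_ite Complex.ofReal, Complex.ofReal_one, Complex.ofReal_zero,
    Complex.ofReal_div, Complex.ofReal_add, sub_mul, ite_mul, one_mul, zero_mul, sum_sub_distrib,
    sum_ite_eq, mem_univ, ↓reduceIte, lap, neg_sub]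
  simp only [div_mul_eq_mul_div, ← Finset.sum_div]
  field_simp
  ring

theorem lap_sub_mul_eq_iff [Fintype X] [DecidableEq X] (hv : ∀ x, 1 + v x ≠ 0) {u f : X → ℂ} :
    (∀ x, lap P u x - v x * u x = f x) ↔
      (1 - Ppot P v).map Complex.ofReal *ᵥ u = fun x => -(f x / ((1 + v x : ℝ) : ℂ)) := by
  simp only [funext_iff, one_sub_Ppot_mulVec_apply hv, neg_div, neg_inj]
  refine forall_congr' fun x => ?_
  rw [div_left_inj' (Complex.ofReal_ne_zero.2 (hv x))]

end Poisson

theorem poisson_with_potential_general {X : Type*} [Fintype X] [DecidableEq X]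
    (P : Matrix X X ℝ)
    (hnonneg : ∀ x y, 0 ≤ P x y)
    (hrow : ∀ x, ∑ y, P x y = 1)
    (hirr : ∀ x y, ∃ n, 1 ≤ n ∧ 0 < (P ^ n) x y)
    (v : X → ℝ) (hv : ∀ x, 0 ≤ v x) (hv' : ∃ x, 0 < v x)
    (f : X → ℂ) :
    IsUnit (1 - Ppot P v) ∧
    (∀ x y, Summable fun n : ℕ => ((Ppot P v) ^ n) x y) ∧
    ((1 - Ppot P v)⁻¹ = Matrix.of fun x y => ∑' n : ℕ, ((Ppot P v) ^ n) x y) ∧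
    (∃! u : X → ℂ, ∀ x, lap P u x - (v x : ℂ) * u x = f x) ∧
    (∀ u : X → ℂ, (∀ x, lap P u x - (v x : ℂ) * u x = f x) →
      ∀ x, u x = -∑ y, (((1 - Ppot P v)⁻¹ x y : ℝ) : ℂ) *
        (f y / ((1 + v y : ℝ) : ℂ))) := by
  obtain ⟨x₀, hx₀⟩ := hv'
  have hsum : Summable (Ppot P v ^ ·) := summable_pow_Ppot hnonneg hrow hv hx₀ fun x =>
    (hirr x x₀).imp fun _ => And.right
  have hright : (1 - Ppot P v) * ∑' n, Ppot P v ^ n = 1 := hsum.one_sub_mul_tsum_pow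
  have hinv : (1 - Ppot P v)⁻¹ = ∑' n, Ppot P v ^ n := inv_eq_right_inv hright
  set B := (1 - Ppot P v).map Complex.ofReal
  set C := (1 - Ppot P v)⁻¹.map Complex.ofReal
  have hBC : B * C = 1 := by
    change (1 - Ppot P v).map Complex.ofRealHom * (1 - Ppot P v)⁻¹.map Complex.ofRealHom = 1
    rw [← Matrix.map_mul, hinv, hright, Matrix.map_one _ (map_zero _) (map_one _)]
  have hsol : ∀ u, (∀ x, lap P u x - v x * u x = f x) ↔
      u = C *ᵥ fun x => -(f x / ((1 + v x : ℝ) : ℂ)) := fun u =>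
    (lap_sub_mul_eq_iff fun x => (by linarith [hv x] : 0 < 1 + v x).ne').trans
      (mulVec_eq_iff_eq_mulVec hBC (mul_eq_one_comm.1 hBC))
  refine ⟨.of_mul_eq_one _ hright, fun x y => Pi.summable.1 (Pi.summable.1 hsum x) y, ?_, ?_,
    fun u hu x => ?_⟩
  · ext x y
    rw [hinv, of_apply, tsum_apply_apply hsum]
  · simp_rw [hsol]
    exact existsUnique_eq
  · simp [(hsol u).1 hu, C, mulVec, dotProduct]

/-- Poisson equation with a potential `v ≥ 0`, `v ≢ 0`:
`I − P̃` is invertible with `(I − P̃)⁻¹ = ∑ₙ P̃ⁿ` (convergent series), and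
`Δu − v·u = f` has the unique solution `u = −(I − P̃)⁻¹ f̃`, `f̃ = f/(1+v)`. -/
theorem poisson_with_potential {X : Type*} [Fintype X] [DecidableEq X]
    (P : Matrix X X ℝ)
    (hcard : 1 < Fintype.card X)
    (hnonneg : ∀ x y, 0 ≤ P x y)
    (hrow : ∀ x, ∑ y, P x y = 1)
    (hirr : ∀ x y, ∃ n, 1 ≤ n ∧ 0 < (P ^ n) x y)
    (v : X → ℝ) (hv : ∀ x, 0 ≤ v x) (hv' : ∃ x, 0 < v x)
    (f : X → ℂ) :
    IsUnit (1 - Ppot P v) ∧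
    (∀ x y, Summable fun n : ℕ => ((Ppot P v) ^ n) x y) ∧
    ((1 - Ppot P v)⁻¹ = Matrix.of fun x y => ∑' n : ℕ, ((Ppot P v) ^ n) x y) ∧
    (∃! u : X → ℂ, ∀ x, lap P u x - (v x : ℂ) * u x = f x) ∧
    (∀ u : X → ℂ, (∀ x, lap P u x - (v x : ℂ) * u x = f x) →
      ∀ x, u x = -∑ y, (((1 - Ppot P v)⁻¹ x y : ℝ) : ℂ) *
        (f y / ((1 + v y : ℝ) : ℂ))) :=
  poisson_with_potential_general P hnonneg hrow hirr v hv hv' f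
end

section
/- Fix o ∈ X and let f ∈ L(X). The iterated Poisson equation Δ²u = f has a solution u ∈ L(X) if and only if ∫_X f dπ = 0. In that case the unique solution with u(o) = 0 is u = G_{X∖{o}}( G_{X∖{o}} f − c·𝟙 ), where c = ∑_{x∈X∖{o}} π(x)·(G_{X∖{o}} f)(x), 𝟙 is the constant function 1, and G_{X∖{o}} is regarded as an X×X matrix with zero entries in the row and column of o; the set of all solutions is exactly {u + c' : c' ∈ ℂ}. -/
open Matrix Finset

/-- The `A × A` submatrix of `P`. -/
def subMatrix {X : Type*} (P : Matrix X X ℝ) (A : Finset X) : Matrix A A ℝ :=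
  Matrix.of fun x y => P x.1 y.1

/-- The Green kernel `G_A = (I_A − P_A)⁻¹`. -/
noncomputable def green {X : Type*} [DecidableEq X] (P : Matrix X X ℝ) (A : Finset X) :
    Matrix A A ℝ :=
  (1 - subMatrix P A)⁻¹

/-- `G_A` regarded as an `X × X` matrix with zero entries outside `A × A`. -/
noncomputable def greenExt {X : Type*} [DecidableEq X] (P : Matrix X X ℝ) (A : Finset X) :
    Matrix X X ℝ :=
  Matrix.of fun x y =>
    if hx : x ∈ A then (if hy : y ∈ A then green P A ⟨x, hx⟩ ⟨y, hy⟩ else 0) else 0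

/-- A real matrix acting on complex functions. -/
noncomputable def mulVecC {m n : Type*} [Fintype n] (M : Matrix m n ℝ) (f : n → ℂ) (x : m) : ℂ :=
  ∑ y, (M x y : ℂ) * f y

/-!
Stationarity of `π` gives `∫ Δw dπ = 0` for every `w`, hence the necessity of `∫ f dπ = 0`.
For an irreducible chain the maximum principle shows that a function harmonic on a proper
subset `A` and vanishing off `A` is zero; so `I_A − P_A` is invertible, and harmonic functions
are constant. Off `o`, `G = G_{X∖{o}}` inverts `−Δ`; at `o` the balance `∫ g dπ = 0` forces
`Δ(Gg)(o) = −g(o)` as well. Applying this to `f` and then to the balanced function `Gf − c`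
gives `Δ²u = f`. Finally, if `Δ²d = 0` then `Δd` is constant with zero `π`-mean, so `Δd = 0`
and `d` is constant.
-/

lemma Finset.sum_eq_sum_subtype_of_eq_zero {X M : Type*} [Fintype X] [AddCommMonoid M]
    (A : Finset X) {f : X → M} (hf : ∀ x ∉ A, f x = 0) : ∑ x, f x = ∑ x : A, f x :=
  (Fintype.sum_subset fun x hx => by_contra fun h => hx (hf x h)).symm.trans
    (sum_coe_sort A f).symm

namespace Matrix.IsIrreducible

variable {n R : Type*} [Ring R] [LinearOrder R] {A : Matrix n n R}

lemma eq_univ_of_forall_pos_imp_mem (hA : A.IsIrreducible) {S : Set n}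
    (hS : ∀ i ∈ S, ∀ j, 0 < A i j → j ∈ S) {i : n} (hi : i ∈ S) : S = Set.univ := by
  let := toQuiver A
  refine Set.eq_univ_of_forall fun j => ?_
  obtain ⟨p, -⟩ := hA.connected i j
  induction p with
  | nil => exact hi
  | cons _ e ih => exact hS _ ih _ e.down

end Matrix.IsIrreducible

section Linear

variable {X : Type*} [Fintype X] {P : Matrix X X ℝ}

lemma lap_eq_mulVec_sub (u : X → ℂ) : lap P u = P.map (↑) *ᵥ u - u := rfl

lemma lap_add (u w : X → ℂ) : lap P (u + w) = lap P u + lap P w := by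
  simp only [lap_eq_mulVec_sub, mulVec_add]
  abel

lemma lap_sub (u w : X → ℂ) : lap P (u - w) = lap P u - lap P w := by
  simp only [lap_eq_mulVec_sub, mulVec_sub]
  abel

lemma lap_neg (u : X → ℂ) : lap P (-u) = -lap P u := by
  simp only [lap_eq_mulVec_sub, mulVec_neg]
  abel

lemma sum_mul_lap_eq_zero {π : X → ℝ} (hπ : π ᵥ* P = π) (w : X → ℂ) :
    ∑ x, (π x : ℂ) * lap P w x = 0 := by
  have hπw : ∀ y, ∑ x, (π x : ℂ) * ((P x y : ℂ) * w y) = π y * w y := fun y => by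
    simp only [← congrFun hπ y, vecMul, dotProduct, ← mul_assoc, ← Finset.sum_mul,
      Complex.ofReal_sum, Complex.ofReal_mul]
  simp only [lap, mul_sub, Finset.mul_sum, sum_sub_distrib]
  rw [Finset.sum_comm, Finset.sum_congr rfl fun y _ => hπw y, sub_self]

end Linear

section Markov

variable {X : Type*} [Fintype X] [DecidableEq X] {P : Matrix X X ℝ}

lemma lap_const (hP : P ∈ rowStochastic ℝ X) (c : ℂ) : lap P (fun _ => c) = 0 := by
  funext x
  simp only [lap, ← Finset.sum_mul, ← Complex.ofReal_sum, sum_row_of_mem_rowStochastic hP,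
    Complex.ofReal_one, one_mul, sub_self, Pi.zero_apply]

lemma lap_add_const (hP : P ∈ rowStochastic ℝ X) (u : X → ℂ) (c : ℂ) :
    lap P (fun x => u x + c) = lap P u := by
  rw [show (fun x => u x + c) = u + fun _ => c from rfl, lap_add, lap_const hP, add_zero]

lemma norm_eq_of_eq_sum_of_pos (hP : P ∈ rowStochastic ℝ X) {v : X → ℂ} {M : ℝ}
    (hM : ∀ y, ‖v y‖ ≤ M) {x : X} (hx : v x = ∑ y, (P x y : ℂ) * v y) (hxM : ‖v x‖ = M)
    {y : X} (hy : 0 < P x y) : ‖v y‖ = M := by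
  refine (hM y).antisymm (not_lt.1 fun hlt => lt_irrefl M ?_)
  calc M = ‖∑ z, (P x z : ℂ) * v z‖ := by rw [← hx, hxM]
    _ ≤ ∑ z, P x z * ‖v z‖ := by
      refine (norm_sum_le _ _).trans_eq (Finset.sum_congr rfl fun z _ => ?_)
      rw [norm_mul, Complex.norm_of_nonneg (nonneg_of_mem_rowStochastic hP)]
    _ < ∑ z, P x z * M :=
      Finset.sum_lt_sum
        (fun z _ => mul_le_mul_of_nonneg_left (hM z) (nonneg_of_mem_rowStochastic hP))
        ⟨y, mem_univ y, mul_lt_mul_of_pos_left hlt hy⟩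
    _ = M := by rw [← Finset.sum_mul, sum_row_of_mem_rowStochastic hP, one_mul]

lemma eq_zero_of_lap_eq_zero_on (hP : P ∈ rowStochastic ℝ X) (hirr : P.IsIrreducible)
    {A : Finset X} (hA : A ≠ univ) {v : X → ℂ} (hv : ∀ x ∈ A, lap P v x = 0)
    (hv0 : ∀ x ∉ A, v x = 0) : v = 0 := by
  obtain ⟨z, hz⟩ : ∃ z, z ∉ A := by simpa [eq_univ_iff_forall] using hA
  have : Nonempty X := ⟨z⟩
  obtain ⟨x₀, hx₀⟩ := Finite.exists_max fun x => ‖v x‖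
  rcases eq_or_ne ‖v x₀‖ 0 with hM | hM
  · exact funext fun x => norm_le_zero_iff.1 (hM ▸ hx₀ x)
  have hSA : ∀ x, ‖v x‖ = ‖v x₀‖ → x ∈ A := fun x hx => by
    by_contra hxA
    exact hM (by rw [← hx, hv0 x hxA, norm_zero])
  have hS : {x | ‖v x‖ = ‖v x₀‖} = Set.univ :=
    hirr.eq_univ_of_forall_pos_imp_mem (fun x hx y hy => norm_eq_of_eq_sum_of_pos hP hx₀
      (sub_eq_zero.1 (hv x (hSA x hx))).symm hx hy) (show x₀ ∈ {x | ‖v x‖ = ‖v x₀‖} from rfl)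
  exact absurd (hSA z (Set.eq_univ_iff_forall.1 hS z)) hz

lemma eq_of_lap_eq_zero (hP : P ∈ rowStochastic ℝ X) (hirr : P.IsIrreducible) {v : X → ℂ}
    (hv : lap P v = 0) (x y : X) : v x = v y := by
  have h := eq_zero_of_lap_eq_zero_on hP hirr (erase_ssubset (mem_univ y)).ne
    (v := v - fun _ => v y) (fun x _ => by rw [lap_sub, hv, lap_const hP, sub_self, Pi.zero_apply])
    (fun x hx => by obtain rfl : x = y := (by simpa using hx); exact sub_self _)
  exact sub_eq_zero.1 (congrFun h x)

lemma eq_add_const_of_lap_lap_eq (hP : P ∈ rowStochastic ℝ X) (hirr : P.IsIrreducible)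
    {π : X → ℝ} (hπ : π ᵥ* P = π) (hπsum : ∑ x, π x = 1) {u w : X → ℂ}
    (h : lap P (lap P w) = lap P (lap P u)) (o : X) : w = fun x => u x + (w o - u o) := by
  have hd : lap P (lap P (w - u)) = 0 := by rw [lap_sub, lap_sub, h, sub_self]
  have hlap : lap P (w - u) = 0 := by
    have hconst := eq_of_lap_eq_zero hP hirr hd
    have hmean := sum_mul_lap_eq_zero hπ (w - u)
    simp_rw [hconst _ o, ← Finset.sum_mul, ← Complex.ofReal_sum, hπsum, Complex.ofReal_one,
      one_mul] at hmean
    exact funext fun x => (hconst x o).trans hmean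
  funext x
  have hdx := eq_of_lap_eq_zero hP hirr hlap x o
  simp only [Pi.sub_apply] at hdx
  linear_combination hdx

lemma lap_dite_mem_apply {A : Finset X} (w : A → ℂ) {x : X} (hx : x ∈ A) :
    lap P (fun y => if hy : y ∈ A then w ⟨y, hy⟩ else 0) x =
      -(((1 - subMatrix P A).map (↑) : Matrix A A ℂ) *ᵥ w) ⟨x, hx⟩ := by
  have hsum : ∑ y, (P x y : ℂ) * (if hy : y ∈ A then w ⟨y, hy⟩ else 0) =
      ∑ y : A, (P x y : ℂ) * w y := by
    rw [sum_eq_sum_subtype_of_eq_zero A fun y hy => by rw [dif_neg hy, mul_zero]]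
    exact Finset.sum_congr rfl fun y _ => by rw [dif_pos y.2]
  rw [lap, hsum, dif_pos hx, Matrix.map_sub _ Complex.ofReal_sub,
    Matrix.map_one _ Complex.ofReal_zero Complex.ofReal_one, sub_mulVec, one_mulVec, Pi.sub_apply,
    neg_sub]
  rfl

lemma mulVecC_greenExt (A : Finset X) (g : X → ℂ) :
    mulVecC (greenExt P A) g =
      fun x => if hx : x ∈ A then ((green P A).map (↑) *ᵥ fun y : A => g y) ⟨x, hx⟩ else 0 := by
  funext x
  by_cases hx : x ∈ A
  · rw [dif_pos hx, mulVecC, sum_eq_sum_subtype_of_eq_zero A fun y hy => by simp [greenExt, hy]]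
    exact Finset.sum_congr rfl fun y _ => by simp [greenExt, hx, y.2]
  · simp [mulVecC, greenExt, hx]

lemma det_one_sub_subMatrix_ne_zero (hP : P ∈ rowStochastic ℝ X) (hirr : P.IsIrreducible)
    {A : Finset X} (hA : A ≠ univ) : (1 - subMatrix P A).det ≠ 0 := by
  intro hdet
  have hdetC : ((1 - subMatrix P A).map ((↑) : ℝ → ℂ)).det = 0 :=
    (RingHom.map_det Complex.ofRealHom _).symm.trans (by simp [hdet])
  obtain ⟨w, hw0, hw⟩ := exists_mulVec_eq_zero_iff.2 hdetC
  have hext := eq_zero_of_lap_eq_zero_on hP hirr hA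
    (fun x hx => by rw [lap_dite_mem_apply w hx, hw, Pi.zero_apply, neg_zero])
    (fun x hx => dif_neg hx)
  exact hw0 (funext fun y => by simpa using congrFun hext y)

lemma lap_mulVecC_greenExt_of_mem (hP : P ∈ rowStochastic ℝ X) (hirr : P.IsIrreducible)
    {A : Finset X} (hA : A ≠ univ) (g : X → ℂ) {x : X} (hx : x ∈ A) :
    lap P (mulVecC (greenExt P A) g) x = -g x := by
  have hinv : (1 - subMatrix P A) * green P A = 1 :=
    mul_nonsing_inv _ (det_one_sub_subMatrix_ne_zero hP hirr hA).isUnit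
  have hinvC : (1 - subMatrix P A).map (↑) * (green P A).map (↑) = (1 : Matrix A A ℂ) := by
    have := congrArg Complex.ofRealHom.mapMatrix hinv
    rwa [map_mul, map_one] at this
  rw [mulVecC_greenExt, lap_dite_mem_apply _ hx, mulVec_mulVec, hinvC, one_mulVec]

lemma mulVecC_greenExt_of_notMem {A : Finset X} (g : X → ℂ) {x : X} (hx : x ∉ A) :
    mulVecC (greenExt P A) g x = 0 := by
  simp [mulVecC, greenExt, hx]

lemma lap_mulVecC_greenExt_erase (hP : P ∈ rowStochastic ℝ X) (hirr : P.IsIrreducible)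
    {π : X → ℝ} (hπ : π ᵥ* P = π) {o : X} (hπo : π o ≠ 0) {g : X → ℂ}
    (hg : ∑ x, (π x : ℂ) * g x = 0) :
    lap P (mulVecC (greenExt P (univ.erase o)) g) = -g := by
  set v := mulVecC (greenExt P (univ.erase o)) g
  have hne : ∀ x ≠ o, lap P v x = -g x := fun x hx =>
    lap_mulVecC_greenExt_of_mem hP hirr (erase_ssubset (mem_univ o)).ne g (by simpa using hx)
  funext x
  rcases eq_or_ne x o with rfl | hx
  · have hsum : ∑ y, (π y : ℂ) * (lap P v y + g y) = 0 := by
      rw [Finset.sum_congr rfl fun y _ => mul_add _ _ _, sum_add_distrib,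
        sum_mul_lap_eq_zero hπ, hg, add_zero]
    rw [Finset.sum_eq_single x (fun y _ hy => by rw [hne y hy, neg_add_cancel, mul_zero])
      (by simp)] at hsum
    exact eq_neg_of_add_eq_zero_left ((mul_eq_zero.1 hsum).resolve_left (by exact_mod_cast hπo))
  · exact hne x hx

lemma lap_lap_greenExt_sub_const (hP : P ∈ rowStochastic ℝ X) (hirr : P.IsIrreducible)
    {π : X → ℝ} (hπ : π ᵥ* P = π) (hπsum : ∑ x, π x = 1) {o : X} (hπo : π o ≠ 0)
    {f : X → ℂ} (hf : ∑ x, (π x : ℂ) * f x = 0) :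
    lap P (lap P (mulVecC (greenExt P (univ.erase o))
      (fun z => mulVecC (greenExt P (univ.erase o)) f z -
        ∑ w ∈ univ.erase o, (π w : ℂ) * mulVecC (greenExt P (univ.erase o)) f w))) = f := by
  set G := mulVecC (greenExt P (univ.erase o))
  set c := ∑ w ∈ univ.erase o, (π w : ℂ) * G f w
  have hc : ∑ x, (π x : ℂ) * G f x = c := (sum_erase _ (by
    rw [show G f o = 0 from mulVecC_greenExt_of_notMem f (notMem_erase o univ), mul_zero])).symm
  have hπ1 : ∑ x, (π x : ℂ) = 1 := by exact_mod_cast hπsum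
  have hbal : ∑ x, (π x : ℂ) * (G f x - c) = 0 := by
    simp only [mul_sub, sum_sub_distrib, ← sum_mul, hc, hπ1, one_mul, sub_self]
  rw [lap_mulVecC_greenExt_erase hP hirr hπ hπo hbal, lap_neg,
    show (fun z => G f z - c) = G f - fun _ => c from rfl, lap_sub, lap_const hP, sub_zero,
    lap_mulVecC_greenExt_erase hP hirr hπ hπo hf, neg_neg]

end Markov

theorem iterated_poisson_equation_general {X : Type*} [Fintype X] [DecidableEq X]
    (P : Matrix X X ℝ)
    (hnonneg : ∀ x y, 0 ≤ P x y)
    (hrow : ∀ x, ∑ y, P x y = 1)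
    (hirr : ∀ x y, ∃ n, 1 ≤ n ∧ 0 < (P ^ n) x y)
    (π : X → ℝ)
    (hπstat : ∀ y, ∑ x, π x * P x y = π y)
    (hπpos : ∀ x, 0 < π x) (hπsum : ∑ x, π x = 1)
    (o : X) (f : X → ℂ) :
    ((∃ u : X → ℂ, ∀ x, lap P (lap P u) x = f x) ↔ ∑ x, (π x : ℂ) * f x = 0) ∧
    (∑ x, (π x : ℂ) * f x = 0 →
      ∃ u : X → ℂ,
        (∀ x, lap P (lap P u) x = f x) ∧ u o = 0 ∧
        (∀ x, u x =
          mulVecC (greenExt P (Finset.univ.erase o))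
            (fun z => mulVecC (greenExt P (Finset.univ.erase o)) f z -
              ∑ w ∈ Finset.univ.erase o,
                (π w : ℂ) * mulVecC (greenExt P (Finset.univ.erase o)) f w) x) ∧
        (∀ w : X → ℂ, ((∀ x, lap P (lap P w) x = f x) ∧ w o = 0) → w = u) ∧
        (∀ w : X → ℂ,
          (∀ x, lap P (lap P w) x = f x) ↔ ∃ c' : ℂ, w = fun x => u x + c')) := by
  have hP : P ∈ rowStochastic ℝ X := mem_rowStochastic_iff_sum.2 ⟨hnonneg, hrow⟩
  have hPirr : P.IsIrreducible := (isIrreducible_iff_exists_pow_pos hnonneg).2 hirr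
  have hπ : π ᵥ* P = π := funext hπstat
  have hπo : π o ≠ 0 := (hπpos o).ne'
  refine ⟨⟨fun ⟨u, hu⟩ => ?_, fun hf => ⟨_, congrFun
    (lap_lap_greenExt_sub_const hP hPirr hπ hπsum hπo hf)⟩⟩, fun hf => ?_⟩
  · simpa only [hu] using sum_mul_lap_eq_zero hπ (lap P u)
  set u := mulVecC (greenExt P (univ.erase o))
    (fun z => mulVecC (greenExt P (univ.erase o)) f z -
      ∑ w ∈ univ.erase o, (π w : ℂ) * mulVecC (greenExt P (univ.erase o)) f w)
  have hu : lap P (lap P u) = f := lap_lap_greenExt_sub_const hP hPirr hπ hπsum hπo hf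
  have huo : u o = 0 := mulVecC_greenExt_of_notMem _ (notMem_erase o univ)
  have hsol (w : X → ℂ) : (∀ x, lap P (lap P w) x = f x) ↔ ∃ c' : ℂ, w = fun x => u x + c' := by
    rw [← funext_iff, ← hu]
    refine ⟨fun h => ⟨_, eq_add_const_of_lap_lap_eq hP hPirr hπ hπsum h o⟩, ?_⟩
    rintro ⟨c', rfl⟩
    rw [lap_add_const hP]
  refine ⟨u, congrFun hu, huo, fun x => rfl, fun w ⟨hw, hwo⟩ => ?_, hsol⟩
  rw [eq_add_const_of_lap_lap_eq hP hPirr hπ hπsum ((funext hw).trans hu.symm) o, hwo, huo]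
  simp

/-- The iterated Poisson equation `Δ²u = f` is solvable iff
`∫_X f dπ = 0`; then the unique grounded solution is
`u = G_{X∖{o}}(G_{X∖{o}} f − c·𝟙)` with `c = ∑_{x ≠ o} π(x)(G_{X∖{o}} f)(x)`,
and all solutions are `u + c'`. -/
theorem iterated_poisson_equation {X : Type*} [Fintype X] [DecidableEq X]
    (P : Matrix X X ℝ)
    (hcard : 1 < Fintype.card X)
    (hnonneg : ∀ x y, 0 ≤ P x y)
    (hrow : ∀ x, ∑ y, P x y = 1)
    (hirr : ∀ x y, ∃ n, 1 ≤ n ∧ 0 < (P ^ n) x y)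
    (π : X → ℝ)
    (hπstat : ∀ y, ∑ x, π x * P x y = π y)
    (hπpos : ∀ x, 0 < π x) (hπsum : ∑ x, π x = 1)
    (o : X) (f : X → ℂ) :
    ((∃ u : X → ℂ, ∀ x, lap P (lap P u) x = f x) ↔ ∑ x, (π x : ℂ) * f x = 0) ∧
    (∑ x, (π x : ℂ) * f x = 0 →
      ∃ u : X → ℂ,
        (∀ x, lap P (lap P u) x = f x) ∧ u o = 0 ∧
        (∀ x, u x =
          mulVecC (greenExt P (Finset.univ.erase o))
            (fun z => mulVecC (greenExt P (Finset.univ.erase o)) f z -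
              ∑ w ∈ Finset.univ.erase o,
                (π w : ℂ) * mulVecC (greenExt P (Finset.univ.erase o)) f w) x) ∧
        (∀ w : X → ℂ, ((∀ x, lap P (lap P w) x = f x) ∧ w o = 0) → w = u) ∧
        (∀ w : X → ℂ,
          (∀ x, lap P (lap P w) x = f x) ↔ ∃ c' : ℂ, w = fun x => u x + c')) :=
  iterated_poisson_equation_general P hnonneg hrow hirr π hπstat hπpos hπsum o f
end
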